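/- Every graph that admits an {I_3, J_4, Q_4}-free labeling is 12-representable, and moreover a 12-representant of length 2n can be constructed. (Equivalently, combining with the necessary condition: a graph is 12-representable if and only if it admits an {I_3, J_4, Q_4}-free labeling.) -/

import Mathlib

/-- The subword of `w` consisting of the occurrences of `x` and `y`. -/
def subw {n : ℕ} (w : List (Fin n)) (x y : Fin n) : List (Fin n) :=
  w.filter fun a => decide (a = x ∨ a = y)

/-- A word has a 12-match if some letter is immediately followed by a strictly larger one. -/
def Has12 {n : ℕ} (s : List (Fin n)) : Prop :=
  ∃ a b : Fin n, a < b ∧ [a, b] <:+: s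

/-- `w` 12-represents the labeled graph `G` on `Fin n`. -/
def Rep12 {n : ℕ} (w : List (Fin n)) (G : SimpleGraph (Fin n)) : Prop :=
  (∀ i : Fin n, i ∈ w) ∧
  ∀ x y : Fin n, x ≠ y → (G.Adj x y ↔ ¬ Has12 (subw w x y))

/-- A graph is 12-representable if some labeling of its vertices admits a 12-representant. -/
def Rep12able {V : Type} [Fintype V] (G : SimpleGraph V) : Prop :=
  ∃ (f : V ≃ Fin (Fintype.card V)) (w : List (Fin (Fintype.card V))),
    Rep12 w (G.map f.toEmbedding)
/-- A labeled graph on `Fin n` is $\{I_3, J_4, Q_4\}$-free. -/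
def I3J4Q4Free {n : ℕ} (G : SimpleGraph (Fin n)) : Prop :=
  (¬ ∃ a b c : Fin n, a < b ∧ b < c ∧ G.Adj a b ∧ G.Adj b c ∧ ¬ G.Adj a c) ∧
  (¬ ∃ a b c d : Fin n, a < b ∧ b < c ∧ c < d ∧
    G.Adj a c ∧ G.Adj b d ∧ ¬ G.Adj a b ∧ ¬ G.Adj a d ∧ ¬ G.Adj b c ∧ ¬ G.Adj c d) ∧
  (¬ ∃ a b c d : Fin n, a < b ∧ b < c ∧ c < d ∧
    G.Adj a d ∧ G.Adj b c ∧ ¬ G.Adj a b ∧ ¬ G.Adj a c ∧ ¬ G.Adj b d ∧ ¬ G.Adj c d)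

/-!
The representant writes every letter twice and is read off from the colex order on
neighbourhoods. In a 12-representant, `x < y` are adjacent iff no `x` occurs before a `y`; this
makes the three patterns visibly impossible, since each would force an occurrence order that is
cyclic. Conversely, the patterns are exactly what is needed to show that for `u < k`, `v ≤ k`
with `u ~ k` and `v ≁ k`, the neighbourhood `N(v)` is colex-smaller than `N(u)`. Placing the first
occurrence of `v` at `N(v)` and the second one just below the least `N(u)` over smaller neighbours
`u` of `v` then puts both copies of `y` before both copies of `x` exactly when `x < y` are adjacent.
-/

namespace List

variable {α : Type*}

theorem pair_sublist_iff {a b : α} {l : List α} :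
    [a, b] <+ l ↔ ∃ l₁ l₂, l = l₁ ++ l₂ ∧ a ∈ l₁ ∧ b ∈ l₂ := by
  rw [cons_sublist_iff]; simp only [singleton_sublist]

theorem pair_sublist_or_pair_sublist_of_mem {a b c : α} {l : List α} (hac : [a, c] <+ l)
    (hb : b ∈ l) : [a, b] <+ l ∨ [b, c] <+ l := by
  obtain ⟨l₁, l₂, rfl, ha, hc⟩ := pair_sublist_iff.1 hac
  rcases mem_append.1 hb with hb | hb
  · exact .inr (pair_sublist_iff.2 ⟨l₁, l₂, rfl, hb, hc⟩)
  · exact .inl (pair_sublist_iff.2 ⟨l₁, l₂, rfl, ha, hb⟩)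

theorem pair_sublist_of_pair_sublist_of_not_pair_sublist {a b c d : α} {l : List α}
    (hab : [a, b] <+ l) (hcd : [c, d] <+ l) (had : ¬ [a, d] <+ l) : [c, b] <+ l := by
  obtain ⟨l₁, l₂, rfl, ha, hb⟩ := pair_sublist_iff.1 hab
  obtain ⟨l₃, l₄, hl, hc, hd⟩ := pair_sublist_iff.1 hcd
  rcases append_eq_append_iff.1 hl with ⟨m, rfl, rfl⟩ | ⟨m, rfl, rfl⟩
  · exact absurd (pair_sublist_iff.2 ⟨l₁, m ++ l₄, rfl, ha, mem_append_right m hd⟩) had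
  · exact pair_sublist_iff.2 ⟨l₃, m ++ l₂, append_assoc .., hc, mem_append_right m hb⟩

theorem pair_infix_cons {x y : α} {l : List α} (hl : ∀ a ∈ l, a = x ∨ a = y) (hy : y ∈ l) :
    [x, y] <:+: x :: l := by
  induction l with
  | nil => simp at hy
  | cons a l ih =>
    rcases hl a mem_cons_self with rfl | rfl
    · rcases mem_cons.1 hy with rfl | hy
      · exact ⟨[], l, rfl⟩
      · exact (ih (fun b hb => hl b (mem_cons_of_mem _ hb)) hy).trans (infix_cons (infix_refl _))
    · exact ⟨[], l, rfl⟩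

theorem pair_infix_of_pair_sublist {x y : α} {l : List α} (hl : ∀ a ∈ l, a = x ∨ a = y)
    (h : [x, y] <+ l) : [x, y] <:+: l := by
  obtain ⟨l₁, l₂, rfl, hx, hy⟩ := pair_sublist_iff.1 h
  obtain ⟨p, q, rfl⟩ := append_of_mem hx
  have hxl : ∀ a ∈ q ++ l₂, a = x ∨ a = y := fun a ha => hl a (by simp_all)
  simpa using (pair_infix_cons hxl (mem_append_right q hy)).trans (suffix_append p _).isInfix

theorem Pairwise.pair_sublist_of_lt {β : Type*} [Preorder β] {f : α → β} {l : List α}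
    (hl : l.Pairwise (fun a b => f a ≤ f b)) {a b : α} (ha : a ∈ l) (hb : b ∈ l)
    (hab : f a < f b) : [a, b] <+ l := by
  obtain ⟨l₁, l₂, rfl⟩ := append_of_mem ha
  rcases mem_append.1 hb with hb | hb
  · exact absurd ((pairwise_append.1 hl).2.2 b hb a mem_cons_self) hab.not_ge
  · rcases mem_cons.1 hb with rfl | hb
    · exact absurd hab (lt_irrefl _)
    · exact pair_sublist_iff.2 ⟨l₁ ++ [a], l₂, by simp, by simp, hb⟩

end List

section Representation

open List

variable {n : ℕ} {w : List (Fin n)} {x y : Fin n} {H : SimpleGraph (Fin n)}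

theorem subw_comm (w : List (Fin n)) (x y : Fin n) : subw w x y = subw w y x :=
  filter_congr fun _ _ => by simp only [or_comm]

theorem has12_subw_iff (hxy : x < y) : Has12 (subw w x y) ↔ [x, y] <+ w := by
  have hmem : ∀ a ∈ subw w x y, a = x ∨ a = y := fun a ha => by
    simpa using (mem_filter.1 ha).2
  constructor
  · rintro ⟨a, b, hab, h⟩
    obtain ⟨rfl, rfl⟩ : a = x ∧ b = y := by
      rcases hmem a (h.subset (by simp)) with rfl | rfl <;>
        rcases hmem b (h.subset (by simp)) with rfl | rfl
      all_goals first | exact ⟨rfl, rfl⟩ | exact absurd hab (by order)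
    exact h.sublist.trans filter_sublist
  · intro h
    refine ⟨x, y, hxy, pair_infix_of_pair_sublist hmem ?_⟩
    simpa [subw] using h.filter (fun a => decide (a = x ∨ a = y))

theorem rep12_iff_pair_sublist : Rep12 w H ↔
    (∀ i, i ∈ w) ∧ ∀ x y, x < y → (H.Adj x y ↔ ¬ [x, y] <+ w) := by
  refine and_congr_right fun _ => ⟨fun h x y hxy => ?_, fun h x y hne => ?_⟩
  · rw [h x y hxy.ne, has12_subw_iff hxy]
  · rcases hne.lt_or_gt with hxy | hxy
    · rw [h x y hxy, has12_subw_iff hxy]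
    · rw [H.adj_comm, h y x hxy, subw_comm, has12_subw_iff hxy]

theorem I3J4Q4Free.of_rep12 (hw : Rep12 w H) : I3J4Q4Free H := by
  obtain ⟨hmem, hadj⟩ := rep12_iff_pair_sublist.1 hw
  have hsub : ∀ {a b}, a < b → ¬ H.Adj a b → [a, b] <+ w := fun hab h =>
    not_not.1 fun h' => h ((hadj _ _ hab).2 h')
  refine ⟨?_, ?_, ?_⟩
  · rintro ⟨a, b, c, hab, hbc, hAab, hAbc, hac⟩
    rcases pair_sublist_or_pair_sublist_of_mem (hsub (hab.trans hbc) hac) (hmem b) with h | h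
    · exact (hadj a b hab).1 hAab h
    · exact (hadj b c hbc).1 hAbc h
  · rintro ⟨a, b, c, d, hab, hbc, hcd, hac, hbd, -, had, hbc', -⟩
    exact (hadj a c (hab.trans hbc)).1 hac <|
      pair_sublist_of_pair_sublist_of_not_pair_sublist (hsub hbc hbc')
        (hsub (hab.trans (hbc.trans hcd)) had) ((hadj b d (hbc.trans hcd)).1 hbd)
  · rintro ⟨a, b, c, d, hab, hbc, hcd, had, hbc', -, hac, hbd, -⟩
    exact (hadj b c hbc).1 hbc' <|
      pair_sublist_of_pair_sublist_of_not_pair_sublist (hsub (hab.trans hbc) hac)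
        (hsub (hbc.trans hcd) hbd) ((hadj a d (hab.trans (hbc.trans hcd))).1 had)

end Representation

section OccurrenceWord

open List

variable {n : ℕ} {β : Type*} [LinearOrder β]

noncomputable def occurrences (key : Fin n × Bool → β) : List (Fin n × Bool) :=
  (Finset.univ : Finset (Fin n × Bool)).toList.mergeSort (fun e f => key e ≤ key f)

noncomputable def occWord (key : Fin n × Bool → β) : List (Fin n) :=
  (occurrences key).map Prod.fst

variable {key : Fin n × Bool → β}

theorem mem_occurrences (e : Fin n × Bool) : e ∈ occurrences key := by
  simp [occurrences]

theorem pairwise_occurrences : (occurrences key).Pairwise (fun e f => key e ≤ key f) := by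
  simpa [occurrences] using pairwise_mergeSort (le := fun e f => decide (key e ≤ key f))
    (fun _ _ _ => by simpa using le_trans) (fun _ _ => by simpa using le_total _ _) _

theorem length_occWord : (occWord key).length = 2 * n := by
  simp [occWord, occurrences, mul_comm]

theorem rep12_occWord {H : SimpleGraph (Fin n)} (hmono : ∀ v, key (v, false) ≤ key (v, true))
    (hadj : ∀ x y, x < y → H.Adj x y → key (y, true) < key (x, false))
    (hnadj : ∀ x y, x < y → ¬ H.Adj x y → key (x, false) < key (y, true)) :
    Rep12 (occWord key) H := by
  refine rep12_iff_pair_sublist.2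
    ⟨fun v => mem_map_of_mem (mem_occurrences (v, false)), fun x y hxy => ⟨?_, ?_⟩⟩
  · rintro hA hsub
    obtain ⟨l, hl, hmap⟩ := sublist_map_iff.1 hsub
    rcases l with _ | ⟨⟨x', b⟩, _ | ⟨⟨y', b'⟩, _ | _⟩⟩ <;> simp only [map_cons, map_nil,
      cons.injEq, reduceCtorEq, and_false, and_true] at hmap
    obtain ⟨rfl, rfl⟩ := hmap
    have hle := pairwise_pair.1 (pairwise_occurrences.sublist hl)
    have hx : key (x, false) ≤ key (x, b) := by cases b <;> simp [hmono]
    have hy : key (y, b') ≤ key (y, true) := by cases b' <;> simp [hmono]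
    exact (hadj x y hxy hA).not_ge (hx.trans (hle.trans hy))
  · intro h
    by_contra hA
    exact h ((pairwise_occurrences.pair_sublist_of_lt (mem_occurrences _) (mem_occurrences _)
      (hnadj x y hxy hA)).map Prod.fst)

end OccurrenceWord

section ColexKey

open Finset Finset.Colex

variable {n : ℕ} (H : SimpleGraph (Fin n)) [DecidableRel H.Adj]

def nbrColex (v : Fin n) : Colex (Finset (Fin n)) := toColex (H.neighborFinset v)

def leftNbrInf (v : Fin n) : Colex (Finset (Fin n)) :=
  ({u | u < v ∧ H.Adj u v} : Finset (Fin n)).inf (nbrColex H)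

/-- The first occurrence of `v` sits just above `N(v)` in colex order, the second one just below
the colex-least neighbourhood of a smaller neighbour of `v` (at the top if there is none). -/
def occKey : Fin n × Bool → Colex (Finset (Fin n)) ×ₗ Bool
  | (v, false) => toLex (nbrColex H v, true)
  | (v, true) => toLex (leftNbrInf H v, false)

variable {H}

theorem nbrColex_lt_top (v : Fin n) : nbrColex H v < ⊤ :=
  toColex_lt_toColex_of_ssubset <| ssubset_univ_iff.2 fun h =>
    H.loopless.irrefl v (H.mem_neighborFinset v v |>.1 (h ▸ mem_univ v))

theorem I3J4Q4Free.nbrColex_lt (hH : I3J4Q4Free H) {u v k : Fin n} (huk : u < k) (hvk : v ≤ k)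
    (hu : H.Adj u k) (hv : ¬ H.Adj v k) : nbrColex H v < nbrColex H u := by
  obtain ⟨hI, hJ, hQ⟩ := hH
  -- A neighbour `j > k` of `v` that is not a neighbour of `u` would create one of the patterns.
  refine toColex_lt_toColex_iff_exists_forall_lt.2
    ⟨k, (H.mem_neighborFinset u k).2 hu, fun h => hv ((H.mem_neighborFinset v k).1 h), ?_⟩
  intro j hvj huj
  rw [SimpleGraph.mem_neighborFinset] at hvj huj
  by_contra! hkj
  have hkj : k < j := hkj.lt_of_ne fun h => hv (h ▸ hvj)
  have hkj' : ¬ H.Adj k j := fun h => hI ⟨u, k, j, huk, hkj, hu, h, huj⟩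
  rcases hvk.lt_or_eq with hvk | rfl
  · rcases lt_trichotomy u v with huv | rfl | hvu
    · exact hJ ⟨u, v, k, j, huv, hvk, hkj, hu, hvj,
        fun h => huj (not_not.1 fun h' => hI ⟨u, v, j, huv, hvk.trans hkj, h, hvj, h'⟩),
        huj, hv, hkj'⟩
    · exact hv hu
    · exact hQ ⟨v, u, k, j, hvu, huk, hkj, hvj, hu,
        fun h => hv (not_not.1 fun h' => hI ⟨v, u, k, hvu, huk, h, hu, h'⟩), hv, huj, hkj'⟩
  · exact hI ⟨u, v, j, huk, hkj, hu, hvj, huj⟩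

theorem I3J4Q4Free.nbrColex_lt_leftNbrInf (hH : I3J4Q4Free H) {v k : Fin n} (hvk : v ≤ k)
    (hv : ¬ H.Adj v k) : nbrColex H v < leftNbrInf H k := by
  refine (Finset.lt_inf_iff (nbrColex_lt_top v)).2 fun u hu => ?_
  simp only [mem_filter, mem_univ, true_and] at hu
  exact hH.nbrColex_lt hu.1 hvk hu.2 hv

theorem I3J4Q4Free.rep12_occWord_occKey (hH : I3J4Q4Free H) : Rep12 (occWord (occKey H)) H := by
  refine rep12_occWord (fun v => ?_) (fun x y hxy hA => ?_) (fun x y hxy hA => ?_)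
  · exact (Prod.Lex.toLex_lt_toLex.2 (.inl (hH.nbrColex_lt_leftNbrInf le_rfl
      (H.loopless.irrefl v)))).le
  · have hxy : x ∈ ({u | u < y ∧ H.Adj u y} : Finset (Fin n)) := by simp [hxy, hA]
    exact Prod.Lex.toLex_lt_toLex'.2 ⟨inf_le hxy, fun _ => Bool.false_lt_true⟩
  · exact Prod.Lex.toLex_lt_toLex.2 (.inl (hH.nbrColex_lt_leftNbrInf hxy.le hA))

end ColexKey

theorem I3J4Q4Free.exists_rep12 {n : ℕ} {H : SimpleGraph (Fin n)} (hH : I3J4Q4Free H) :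
    ∃ w : List (Fin n), w.length = 2 * n ∧ Rep12 w H := by
  classical
  exact ⟨_, length_occWord, hH.rep12_occWord_occKey⟩

/-- A graph admitting an $\{I_3,J_4,Q_4\}$-free labeling is 12-representable, with a
12-representant of length $2n$; combined with the necessary condition, a graph is
12-representable iff it admits an $\{I_3,J_4,Q_4\}$-free labeling. -/
theorem rep12able_iff_I3J4Q4Free_labeling {V : Type} [Fintype V] (G : SimpleGraph V) :
    ((∃ f : V ≃ Fin (Fintype.card V), I3J4Q4Free (G.map f.toEmbedding)) →
      ∃ (f : V ≃ Fin (Fintype.card V)) (w : List (Fin (Fintype.card V))),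
        w.length = 2 * Fintype.card V ∧ Rep12 w (G.map f.toEmbedding)) ∧
    (Rep12able G ↔ ∃ f : V ≃ Fin (Fintype.card V), I3J4Q4Free (G.map f.toEmbedding)) := by
  refine ⟨fun ⟨f, hf⟩ => ⟨f, hf.exists_rep12⟩, fun ⟨f, w, hw⟩ => ⟨f, .of_rep12 hw⟩,
    fun ⟨f, hf⟩ => ?_⟩
  obtain ⟨w, -, hw⟩ := hf.exists_rep12
  exact ⟨f, w, hw⟩
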